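/- arXiv:2308.13350 — 3 statements merged into one kernel-verified Lean document; each statement's English description precedes it below -/
import Mathlib

section
/- Let f,g:ℂ^n→ℂ be holomorphic polynomial functions. The mixed function F = f·conj(g), viewed as a real map ℝ^{2n}→ℝ², is horizontally weakly conformal if and only if ⟨ conj(df), conj(dg) ⟩_ℂ = 0 identically, where df and dg are the holomorphic gradients of f and g. -/
/-!
At a point, write `dF(e_i) = a_i + b_i·I` over an orthonormal basis `(e_i)`; then
`∑ (a_i + b_i·I)² = (|∇Re F|² - |∇Im F|²) + 2⟨∇Re F, ∇Im F⟩·I`, so horizontal weak conformality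
of `F` means `∑_j ∂F/∂z_j · ∂F/∂z̄_j = 0`. For `F = f·ḡ` with `f, g` holomorphic, `∂F = ḡ·∂f` and
`∂̄F = f·conj(∂g)`, so the condition reads `f·ḡ·S = 0` with `S = ∑_j ∂f/∂z_j · conj(∂g/∂z_j)`.
The function `S` is continuous (`∂f/∂z_j` is the derivative of a jointly continuous family of
holomorphic functions of one variable) and vanishes wherever `f` or `g` vanishes on a
neighbourhood. So if `S(w) ≠ 0`, then `f` is not locally zero at `w`, and at a point near `w`
with `f ≠ 0 ≠ S` the function `g` vanishes on a neighbourhood, forcing `S = 0` there.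
-/

open scoped RealInnerProductSpace ComplexConjugate

noncomputable section

/-- The model for `ℂ^n ≅ ℝ^{2n}`: a point `w` represents `z = w.1 + i w.2`. -/
abbrev CSpace (n : ℕ) := WithLp 2 (EuclideanSpace ℝ (Fin n) × EuclideanSpace ℝ (Fin n))

/-- The holomorphic (Wirtinger) gradient `∂f/∂z_j = (∂f/∂x_j - i ∂f/∂y_j)/2`. -/
def wdz {n : ℕ} (f : CSpace n → ℂ) (w : CSpace n) (j : Fin n) : ℂ :=
  (1 / 2 : ℂ) *
    (fderiv ℝ f w ((WithLp.equiv 2 _).symm (EuclideanSpace.single j 1, 0)) -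
      Complex.I * fderiv ℝ f w ((WithLp.equiv 2 _).symm (0, EuclideanSpace.single j 1)))

/-- The anti-holomorphic (Wirtinger) gradient `∂f/∂z̄_j = (∂f/∂x_j + i ∂f/∂y_j)/2`. -/
def wdzbar {n : ℕ} (f : CSpace n → ℂ) (w : CSpace n) (j : Fin n) : ℂ :=
  (1 / 2 : ℂ) *
    (fderiv ℝ f w ((WithLp.equiv 2 _).symm (EuclideanSpace.single j 1, 0)) +
      Complex.I * fderiv ℝ f w ((WithLp.equiv 2 _).symm (0, EuclideanSpace.single j 1)))

/-- `f` is horizontally weakly conformal: at every point, the real gradients of `Re f`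
and `Im f` are orthogonal and have equal norms. -/
def IsHWC {n : ℕ} (f : CSpace n → ℂ) : Prop :=
  ∀ w : CSpace n,
    ⟪gradient (fun w => (f w).re) w, gradient (fun w => (f w).im) w⟫ = 0 ∧
    ‖gradient (fun w => (f w).re) w‖ = ‖gradient (fun w => (f w).im) w‖


open scoped Topology

section Conformality

variable {ι E : Type*} [Fintype ι] [NormedAddCommGroup E] [InnerProductSpace ℝ E]

theorem OrthonormalBasis.sum_sq_inner_add_inner_mul_I (b : OrthonormalBasis ι ℝ E) (x y : E) :
    ∑ i, ((⟪x, b i⟫ : ℂ) + ⟪y, b i⟫ * Complex.I) ^ 2 =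
      ((‖x‖ ^ 2 - ‖y‖ ^ 2 : ℝ) : ℂ) + ((2 * ⟪x, y⟫ : ℝ) : ℂ) * Complex.I := by
  have hsq : ∀ z : E, ∑ i, ⟪z, b i⟫ ^ 2 = ‖z‖ ^ 2 := fun z => by
    simp_rw [← real_inner_self_eq_norm_sq, ← b.sum_inner_mul_inner z z, real_inner_comm (b _) z, sq]
  have hxy : ∑ i, ⟪x, b i⟫ * ⟪y, b i⟫ = ⟪x, y⟫ := by
    simp_rw [← b.sum_inner_mul_inner x y, real_inner_comm (b _) y]
  have hterm : ∀ i, ((⟪x, b i⟫ : ℂ) + ⟪y, b i⟫ * Complex.I) ^ 2 =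
      ((⟪x, b i⟫ ^ 2 - ⟪y, b i⟫ ^ 2 : ℝ) : ℂ) +
        ((2 * (⟪x, b i⟫ * ⟪y, b i⟫) : ℝ) : ℂ) * Complex.I := by
    intro i
    push_cast
    linear_combination (⟪y, b i⟫ : ℂ) ^ 2 * Complex.I_sq
  rw [Finset.sum_congr rfl fun i _ => hterm i, Finset.sum_add_distrib, ← Finset.sum_mul,
    ← Complex.ofReal_sum, ← Complex.ofReal_sum, Finset.sum_sub_distrib, ← Finset.mul_sum, hsq, hsq,
    hxy]

theorem OrthonormalBasis.sum_sq_inner_add_inner_mul_I_eq_zero_iff (b : OrthonormalBasis ι ℝ E)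
    (x y : E) :
    ∑ i, ((⟪x, b i⟫ : ℂ) + ⟪y, b i⟫ * Complex.I) ^ 2 = 0 ↔ ⟪x, y⟫ = 0 ∧ ‖x‖ = ‖y‖ := by
  rw [b.sum_sq_inner_add_inner_mul_I, Complex.ext_iff]
  simp only [Complex.add_re, Complex.ofReal_re, Complex.mul_re, Complex.I_re, Complex.ofReal_im,
    Complex.I_im, Complex.add_im, Complex.mul_im, Complex.zero_re, Complex.zero_im]
  constructor
  · rintro ⟨hnorm, hinner⟩
    refine ⟨by linarith, ?_⟩
    exact (sq_eq_sq₀ (norm_nonneg _) (norm_nonneg _)).mp (by linarith)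
  · rintro ⟨hinner, hnorm⟩
    constructor <;> simp [hinner, hnorm]

variable [CompleteSpace E]

theorem inner_gradient_re {F : E → ℂ} {w : E} (hF : DifferentiableAt ℝ F w) (v : E) :
    ⟪gradient (fun w => (F w).re) w, v⟫ = (fderiv ℝ F w v).re := by
  rw [inner_gradient_left]
  exact congrArg (· v) (Complex.reCLM.hasFDerivAt.comp w hF.hasFDerivAt).fderiv

theorem inner_gradient_im {F : E → ℂ} {w : E} (hF : DifferentiableAt ℝ F w) (v : E) :
    ⟪gradient (fun w => (F w).im) w, v⟫ = (fderiv ℝ F w v).im := by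
  rw [inner_gradient_left]
  exact congrArg (· v) (Complex.imCLM.hasFDerivAt.comp w hF.hasFDerivAt).fderiv

theorem inner_gradient_re_im_eq_zero_and_norm_eq_iff (b : OrthonormalBasis ι ℝ E) {F : E → ℂ}
    {w : E} (hF : DifferentiableAt ℝ F w) :
    (⟪gradient (fun w => (F w).re) w, gradient (fun w => (F w).im) w⟫ = 0 ∧
      ‖gradient (fun w => (F w).re) w‖ = ‖gradient (fun w => (F w).im) w‖) ↔
      ∑ i, fderiv ℝ F w (b i) ^ 2 = 0 := by
  rw [← b.sum_sq_inner_add_inner_mul_I_eq_zero_iff]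
  simp only [inner_gradient_re hF, inner_gradient_im hF, Complex.re_add_im]

end Conformality

variable {n : ℕ}

def unitX (n : ℕ) (j : Fin n) : CSpace n := (WithLp.equiv 2 _).symm (EuclideanSpace.single j 1, 0)

def unitY (n : ℕ) (j : Fin n) : CSpace n := (WithLp.equiv 2 _).symm (0, EuclideanSpace.single j 1)

theorem wdz_eq (f : CSpace n → ℂ) (w : CSpace n) (j : Fin n) :
    wdz f w j = 1 / 2 * (fderiv ℝ f w (unitX n j) - Complex.I * fderiv ℝ f w (unitY n j)) :=
  rfl

theorem wdzbar_eq (f : CSpace n → ℂ) (w : CSpace n) (j : Fin n) :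
    wdzbar f w j = 1 / 2 * (fderiv ℝ f w (unitX n j) + Complex.I * fderiv ℝ f w (unitY n j)) :=
  rfl

theorem fderiv_unitY_of_wdzbar_eq_zero {f : CSpace n → ℂ} {w : CSpace n} {j : Fin n}
    (h : wdzbar f w j = 0) : fderiv ℝ f w (unitY n j) = Complex.I * fderiv ℝ f w (unitX n j) := by
  rw [wdzbar_eq] at h
  linear_combination (-2 * Complex.I) * h + fderiv ℝ f w (unitY n j) * Complex.I_sq

theorem wdz_eq_fderiv_unitX_of_wdzbar_eq_zero {f : CSpace n → ℂ} {w : CSpace n} {j : Fin n}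
    (h : wdzbar f w j = 0) : wdz f w j = fderiv ℝ f w (unitX n j) := by
  rw [wdz_eq, fderiv_unitY_of_wdzbar_eq_zero h]
  linear_combination (-1 / 2 * fderiv ℝ f w (unitX n j)) * Complex.I_sq

def cspaceBasis (n : ℕ) : OrthonormalBasis (Fin n ⊕ Fin n) ℝ (CSpace n) :=
  (EuclideanSpace.basisFun (Fin n) ℝ).prod (EuclideanSpace.basisFun (Fin n) ℝ)

theorem cspaceBasis_inl (j : Fin n) : cspaceBasis n (Sum.inl j) = unitX n j := by
  simp [cspaceBasis, unitX, OrthonormalBasis.prod_apply]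

theorem cspaceBasis_inr (j : Fin n) : cspaceBasis n (Sum.inr j) = unitY n j := by
  simp [cspaceBasis, unitY, OrthonormalBasis.prod_apply]

theorem sum_wdz_mul_wdzbar (F : CSpace n → ℂ) (w : CSpace n) :
    ∑ j, wdz F w j * wdzbar F w j = 1 / 4 * ∑ i, fderiv ℝ F w (cspaceBasis n i) ^ 2 := by
  simp only [Fintype.sum_sum_type, cspaceBasis_inl, cspaceBasis_inr, wdz_eq, wdzbar_eq,
    ← Finset.sum_add_distrib, Finset.mul_sum]
  refine Finset.sum_congr rfl fun j _ => ?_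
  linear_combination (-1 / 4 * fderiv ℝ F w (unitY n j) ^ 2) * Complex.I_sq

theorem isHWC_iff {F : CSpace n → ℂ} (hF : Differentiable ℝ F) :
    IsHWC F ↔ ∀ w, ∑ j, wdz F w j * wdzbar F w j = 0 := by
  refine forall_congr' fun w => ?_
  rw [inner_gradient_re_im_eq_zero_and_norm_eq_iff (cspaceBasis n) (hF w), sum_wdz_mul_wdzbar]
  simp

theorem fderiv_mul_conj_apply {f g : CSpace n → ℂ} {w : CSpace n} (hf : DifferentiableAt ℝ f w)
    (hg : DifferentiableAt ℝ g w) (v : CSpace n) :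
    fderiv ℝ (fun w => f w * conj (g w)) w v =
      f w * conj (fderiv ℝ g w v) + conj (g w) * fderiv ℝ f w v := by
  change fderiv ℝ (fun w => f w * star (g w)) w v = _
  rw [fderiv_fun_mul hf hg.star, fderiv_star]
  rfl

theorem wdz_mul_conj {f g : CSpace n → ℂ} {w : CSpace n} (hf : DifferentiableAt ℝ f w)
    (hg : DifferentiableAt ℝ g w) (j : Fin n) :
    wdz (fun w => f w * conj (g w)) w j = conj (g w) * wdz f w j + f w * conj (wdzbar g w j) := by
  simp only [wdz_eq, wdzbar_eq, fderiv_mul_conj_apply hf hg, map_mul, map_add, map_div₀, map_one,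
    map_ofNat, Complex.conj_I]
  ring

theorem wdzbar_mul_conj {f g : CSpace n → ℂ} {w : CSpace n} (hf : DifferentiableAt ℝ f w)
    (hg : DifferentiableAt ℝ g w) (j : Fin n) :
    wdzbar (fun w => f w * conj (g w)) w j =
      conj (g w) * wdzbar f w j + f w * conj (wdz g w j) := by
  simp only [wdz_eq, wdzbar_eq, fderiv_mul_conj_apply hf hg, map_mul, map_sub, map_div₀, map_one,
    map_ofNat, Complex.conj_I]
  ring

theorem sum_wdz_mul_wdzbar_mul_conj {f g : CSpace n → ℂ} {w : CSpace n}
    (hf : DifferentiableAt ℝ f w) (hg : DifferentiableAt ℝ g w) (hfhol : ∀ j, wdzbar f w j = 0)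
    (hghol : ∀ j, wdzbar g w j = 0) :
    ∑ j, wdz (fun w => f w * conj (g w)) w j * wdzbar (fun w => f w * conj (g w)) w j =
      f w * conj (g w) * ∑ j, wdz f w j * conj (wdz g w j) := by
  simp only [wdz_mul_conj hf hg, wdzbar_mul_conj hf hg, hfhol, hghol, map_zero, mul_zero,
    add_zero, zero_add, Finset.mul_sum]
  exact Finset.sum_congr rfl fun j _ => by ring

theorem continuous_deriv_apply_of_continuous_uncurry {X : Type*} [TopologicalSpace X]
    {G : X → ℂ → ℂ} (hG : Continuous ↿G) (hdiff : ∀ x, Differentiable ℂ (G x)) (t : ℂ) :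
    Continuous fun x => deriv (G x) t := by
  refine continuous_iff_continuousAt.mpr fun x₀ => ?_
  have hconv : TendstoLocallyUniformly G (G x₀) (𝓝 x₀) :=
    ContinuousMap.tendsto_iff_tendstoLocallyUniformly.mp
      ((ContinuousMap.curry ⟨_, hG⟩).continuous.tendsto x₀)
  exact ((tendstoLocallyUniformlyOn_univ.mpr hconv).deriv
    (Filter.Eventually.of_forall fun x => (hdiff x).differentiableOn) isOpen_univ).tendsto_at
    (Set.mem_univ t)

-- A shortcut: without it, elaborating `smulRight` into `CSpace n` times out.
instance CSpace.instContinuousSMul (n : ℕ) : ContinuousSMul ℝ (CSpace n) :=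
  IsBoundedSMul.continuousSMul

def complexLine (n : ℕ) (j : Fin n) : ℂ →L[ℝ] CSpace n :=
  Complex.reCLM.smulRight (unitX n j) + Complex.imCLM.smulRight (unitY n j)

theorem complexLine_apply (j : Fin n) (t : ℂ) :
    complexLine n j t = t.re • unitX n j + t.im • unitY n j :=
  rfl

theorem hasDerivAt_add_complexLine {f : CSpace n → ℂ} {w : CSpace n} {j : Fin n} {t : ℂ}
    (hf : DifferentiableAt ℝ f (w + complexLine n j t))
    (hhol : wdzbar f (w + complexLine n j t) j = 0) :
    HasDerivAt (fun s => f (w + complexLine n j s)) (wdz f (w + complexLine n j t) j) t := by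
  set p := w + complexLine n j t
  rw [hasDerivAt_iff_hasFDerivAt]
  refine hasFDerivAt_of_restrictScalars ℝ
    (hf.hasFDerivAt.comp t ((complexLine n j).hasFDerivAt.const_add w)) ?_
  ext s
  simp only [ContinuousLinearMap.coe_restrictScalars', ContinuousLinearMap.toSpanSingleton_apply,
    ContinuousLinearMap.coe_comp, Function.comp_apply, complexLine_apply, map_add, map_smul,
    fderiv_unitY_of_wdzbar_eq_zero hhol, wdz_eq_fderiv_unitX_of_wdzbar_eq_zero hhol,
    Complex.real_smul, smul_eq_mul]
  conv_lhs => rw [← Complex.re_add_im s]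
  ring

theorem continuous_wdz {f : CSpace n → ℂ} (hf : Differentiable ℝ f) {j : Fin n}
    (hhol : ∀ w, wdzbar f w j = 0) : Continuous fun w => wdz f w j := by
  have hline : ∀ w t, HasDerivAt (fun s => f (w + complexLine n j s))
      (wdz f (w + complexLine n j t) j) t := fun w t =>
    hasDerivAt_add_complexLine (hf _) (hhol _)
  have hwdz : (fun w => wdz f w j) = fun w => deriv (fun s => f (w + complexLine n j s)) 0 :=
    funext fun w => by simpa using (hline w 0).deriv.symm
  rw [hwdz]
  exact continuous_deriv_apply_of_continuous_uncurry (by have := hf.continuous; fun_prop)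
    (fun w t => (hline w t).differentiableAt) 0

theorem wdz_eq_zero_of_eventuallyEq_zero {q : CSpace n → ℂ} {w : CSpace n} (h : q =ᶠ[𝓝 w] 0)
    (j : Fin n) : wdz q w j = 0 := by
  simp [wdz_eq, h.fderiv_eq]

theorem eq_zero_of_vanishing_factor {X M N P : Type*} [TopologicalSpace X] [Zero M] [Zero N]
    [Zero P] [TopologicalSpace M] [T1Space M] [TopologicalSpace P] [T1Space P] {f : X → M}
    {g : X → N} {S : X → P} (hf : Continuous f) (hS : Continuous S)
    (hfg : ∀ x, S x ≠ 0 → f x = 0 ∨ g x = 0)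
    (hloc : ∀ x, f =ᶠ[𝓝 x] 0 ∨ g =ᶠ[𝓝 x] 0 → S x = 0) (x : X) : S x = 0 := by
  by_contra hx
  have hf_freq : ∃ᶠ y in 𝓝 x, f y ≠ 0 := fun h =>
    hx (hloc x (Or.inl (h.mono fun _ hy => not_not.mp hy)))
  obtain ⟨y, hfy, hSy⟩ := (hf_freq.and_eventually (hS.continuousAt.eventually_ne hx)).exists
  have hgy : g =ᶠ[𝓝 y] 0 :=
    ((hS.continuousAt.eventually_ne hSy).and (hf.continuousAt.eventually_ne hfy)).mono
      fun z hz => (hfg z hz.1).resolve_left hz.2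
  exact hSy (hloc y (Or.inr hgy))

/-- For holomorphic (polynomial) functions `f, g : ℂ^n → ℂ`, the mixed function
`F = f·conj(g)`, viewed as a real map `ℝ^{2n} → ℝ²`, is horizontally weakly conformal iff
`⟨conj(df), conj(dg)⟩_ℂ = ∑_j (∂f/∂z_j)·conj(∂g/∂z_j) = 0` identically. -/
theorem fgbar_hwc_iff {n : ℕ} (f g : CSpace n → ℂ)
    (hf : Differentiable ℝ f) (hg : Differentiable ℝ g)
    (hfhol : ∀ w j, wdzbar f w j = 0) (hghol : ∀ w j, wdzbar g w j = 0) :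
    IsHWC (fun w => f w * conj (g w)) ↔
      ∀ w : CSpace n, ∑ j : Fin n, wdz f w j * conj (wdz g w j) = 0 := by
  set S := fun w => ∑ j : Fin n, wdz f w j * conj (wdz g w j)
  have hS : Continuous S := continuous_finsetSum _ fun j _ =>
    (continuous_wdz hf (hfhol · j)).mul
      (Complex.continuous_conj.comp (continuous_wdz hg (hghol · j)))
  have hsum := fun w => sum_wdz_mul_wdzbar_mul_conj (hf w) (hg w) (hfhol w) (hghol w)
  rw [isHWC_iff (F := fun w => f w * conj (g w)) (hf.mul hg.star)]
  simp only [hsum]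
  change (∀ w, f w * conj (g w) * S w = 0) ↔ ∀ w, S w = 0
  refine ⟨fun h => eq_zero_of_vanishing_factor (g := g) hf.continuous hS (fun w hw => ?_)
    (fun w hw => ?_), fun h w => by rw [h w, mul_zero]⟩
  · simpa [hw] using h w
  · rcases hw with hf0 | hg0
    · simp [S, wdz_eq_zero_of_eventuallyEq_zero hf0]
    · simp [S, wdz_eq_zero_of_eventuallyEq_zero hg0]
end
end

section
/- If (G₁,G₂):ℝ^{2m}→ℝ² and (G₃,G₄):ℝ^{2n}→ℝ² are horizontally weakly conformal maps in separable variables (the first depending only on the first 2m coordinates and the second only on the last 2n coordinates of ℝ^{2m+2n}), then (G₁G₃−G₂G₄, G₁G₄+G₂G₃):ℝ^{2(m+n)}→ℝ² is horizontally weakly conformal. -/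
/-!
In separable variables the gradient of `G₁G₃ − G₂G₄` at `(x, y)` is
`(G₃ ∇G₁ − G₄ ∇G₂, G₁ ∇G₃ − G₂ ∇G₄)` and that of `G₁G₄ + G₂G₃` is
`(G₄ ∇G₁ + G₃ ∇G₂, G₁ ∇G₄ + G₂ ∇G₃)`. In each block the pair of components arises from the
conformal pair `(∇G₁, ∇G₂)`, resp. `(∇G₃, ∇G₄)`, by a rotation-scaling
`(u, v) ↦ (c u − d v, d u + c v)`, which preserves conformality, and conformality of pairs of
vectors survives orthogonal direct sums.
-/

open scoped RealInnerProductSpace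

noncomputable section

/-- A pair `(H₁, H₂)` of real functions is horizontally weakly conformal if at every point
`⟨∇H₁, ∇H₂⟩ = 0` and `‖∇H₁‖ = ‖∇H₂‖`. -/
def IsHWCPair {E : Type*} [NormedAddCommGroup E] [InnerProductSpace ℝ E] [CompleteSpace E]
    (H₁ H₂ : E → ℝ) : Prop :=
  ∀ x : E, ⟪gradient H₁ x, gradient H₂ x⟫ = 0 ∧
    ‖gradient H₁ x‖ = ‖gradient H₂ x‖

section ConformalPair

variable {E F : Type*} [NormedAddCommGroup E] [InnerProductSpace ℝ E]
  [NormedAddCommGroup F] [InnerProductSpace ℝ F]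

def IsConformalPair (u v : E) : Prop :=
  ⟪u, v⟫ = 0 ∧ ‖u‖ = ‖v‖

theorem IsConformalPair.rotate {u v : E} (h : IsConformalPair u v) (c d : ℝ) :
    IsConformalPair (c • u - d • v) (d • u + c • v) := by
  obtain ⟨huv, hnorm⟩ := h
  have hvu : ⟪v, u⟫ = 0 := by rw [real_inner_comm, huv]
  have hsq : ⟪u, u⟫ = ⟪v, v⟫ := by simp only [real_inner_self_eq_norm_sq, hnorm]
  constructor
  · simp only [inner_sub_left, inner_add_right, real_inner_smul_left, real_inner_smul_right,
      huv, hvu, hsq]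
    ring
  · rw [← sq_eq_sq₀ (norm_nonneg _) (norm_nonneg _), ← real_inner_self_eq_norm_sq,
      ← real_inner_self_eq_norm_sq]
    simp only [inner_sub_left, inner_sub_right, inner_add_left, inner_add_right,
      real_inner_smul_left, real_inner_smul_right, huv, hvu, hsq]
    ring

theorem IsConformalPair.prod {p q : E} {r s : F} (hpq : IsConformalPair p q)
    (hrs : IsConformalPair r s) :
    IsConformalPair (WithLp.toLp 2 (p, r)) (WithLp.toLp 2 (q, s)) := by
  refine ⟨by simp [hpq.1, hrs.1], ?_⟩
  rw [← sq_eq_sq₀ (norm_nonneg _) (norm_nonneg _), WithLp.prod_norm_sq_eq_of_L2,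
    WithLp.prod_norm_sq_eq_of_L2]
  simp [hpq.2, hrs.2]

end ConformalPair

section Gradient

variable {E F : Type*} [NormedAddCommGroup E] [InnerProductSpace ℝ E] [CompleteSpace E]
  [NormedAddCommGroup F] [InnerProductSpace ℝ F] [CompleteSpace F]
  {f g : E → ℝ} {u v x : E}

theorem HasGradientAt.add (hf : HasGradientAt f u x) (hg : HasGradientAt g v x) :
    HasGradientAt (fun y => f y + g y) (u + v) x := by
  rw [hasGradientAt_iff_hasFDerivAt] at *
  rw [map_add]
  exact hf.add hg

theorem HasGradientAt.sub (hf : HasGradientAt f u x) (hg : HasGradientAt g v x) :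
    HasGradientAt (fun y => f y - g y) (u - v) x := by
  rw [hasGradientAt_iff_hasFDerivAt] at *
  rw [map_sub]
  exact hf.sub hg

theorem HasGradientAt.mul (hf : HasGradientAt f u x) (hg : HasGradientAt g v x) :
    HasGradientAt (fun y => f y * g y) (f x • v + g x • u) x := by
  rw [hasGradientAt_iff_hasFDerivAt] at *
  rw [map_add, map_smul, map_smul]
  exact hf.mul hg

theorem HasGradientAt.comp_ofLp_fst {A : E → ℝ} {z : WithLp 2 (E × F)}
    (hA : HasGradientAt A u z.ofLp.1) :
    HasGradientAt (fun w : WithLp 2 (E × F) => A w.ofLp.1) (WithLp.toLp 2 (u, 0)) z := by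
  rw [hasGradientAt_iff_hasFDerivAt] at *
  refine (hA.comp z (WithLp.fstL 2 ℝ E F).hasFDerivAt).congr_fderiv ?_
  ext w
  simp

theorem HasGradientAt.comp_ofLp_snd {B : F → ℝ} {v : F} {z : WithLp 2 (E × F)}
    (hB : HasGradientAt B v z.ofLp.2) :
    HasGradientAt (fun w : WithLp 2 (E × F) => B w.ofLp.2) (WithLp.toLp 2 (0, v)) z := by
  rw [hasGradientAt_iff_hasFDerivAt] at *
  refine (hB.comp z (WithLp.sndL 2 ℝ E F).hasFDerivAt).congr_fderiv ?_
  ext w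
  simp

theorem hasGradientAt_ofLp_fst_mul_ofLp_snd {A : E → ℝ} {B : F → ℝ} {v : F}
    {z : WithLp 2 (E × F)} (hA : HasGradientAt A u z.ofLp.1) (hB : HasGradientAt B v z.ofLp.2) :
    HasGradientAt (fun w : WithLp 2 (E × F) => A w.ofLp.1 * B w.ofLp.2)
      (WithLp.toLp 2 (B z.ofLp.2 • u, A z.ofLp.1 • v)) z := by
  convert hA.comp_ofLp_fst.mul hB.comp_ofLp_snd using 1
  refine WithLp.ofLp_injective 2 (Prod.ext ?_ ?_) <;> simp

end Gradient

/-- If `(G₁,G₂) : ℝ^{2m} → ℝ²` and `(G₃,G₄) : ℝ^{2n} → ℝ²` are horizontally weakly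
conformal maps in separable variables, then the complex product
`(G₁G₃ − G₂G₄, G₁G₄ + G₂G₃) : ℝ^{2(m+n)} → ℝ²` is horizontally weakly conformal. -/
theorem hwc_complex_product_separable {m n : ℕ}
    (G₁ G₂ : EuclideanSpace ℝ (Fin (2 * m)) → ℝ)
    (G₃ G₄ : EuclideanSpace ℝ (Fin (2 * n)) → ℝ)
    (h₁ : ContDiff ℝ 1 G₁) (h₂ : ContDiff ℝ 1 G₂) (h₃ : ContDiff ℝ 1 G₃)
    (h₄ : ContDiff ℝ 1 G₄)
    (hwc12 : IsHWCPair G₁ G₂) (hwc34 : IsHWCPair G₃ G₄) :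
    IsHWCPair
      (fun z : WithLp 2 (EuclideanSpace ℝ (Fin (2 * m)) × EuclideanSpace ℝ (Fin (2 * n))) =>
        G₁ z.ofLp.1 * G₃ z.ofLp.2 - G₂ z.ofLp.1 * G₄ z.ofLp.2)
      (fun z : WithLp 2 (EuclideanSpace ℝ (Fin (2 * m)) × EuclideanSpace ℝ (Fin (2 * n))) =>
        G₁ z.ofLp.1 * G₄ z.ofLp.2 + G₂ z.ofLp.1 * G₃ z.ofLp.2) := by
  intro z
  have hg₁ := (h₁.differentiable one_ne_zero z.ofLp.1).hasGradientAt
  have hg₂ := (h₂.differentiable one_ne_zero z.ofLp.1).hasGradientAt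
  have hg₃ := (h₃.differentiable one_ne_zero z.ofLp.2).hasGradientAt
  have hg₄ := (h₄.differentiable one_ne_zero z.ofLp.2).hasGradientAt
  have hH₁ := (hasGradientAt_ofLp_fst_mul_ofLp_snd hg₁ hg₃).sub
    (hasGradientAt_ofLp_fst_mul_ofLp_snd hg₂ hg₄)
  have hH₂ := (hasGradientAt_ofLp_fst_mul_ofLp_snd hg₁ hg₄).add
    (hasGradientAt_ofLp_fst_mul_ofLp_snd hg₂ hg₃)
  rw [hH₁.gradient, hH₂.gradient, ← WithLp.toLp_sub, ← WithLp.toLp_add, Prod.mk_sub_mk,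
    Prod.mk_add_mk, add_comm (G₁ z.ofLp.1 • _)]
  exact (IsConformalPair.rotate (hwc12 z.ofLp.1) _ _).prod
    (IsConformalPair.rotate (hwc34 z.ofLp.2) _ _)
end
end

section
/- The map G:ℝ³→ℝ² given by G(x,y,z)=(xy,z²) does NOT satisfy the Milnor condition (b) at the origin: in fact closure(M(G)∖V_G) ∩ V_G = V_G, where V_G={x=z=0}∪{y=z=0} and M(G)⊇{z=0}. -/
noncomputable section

/-- The zero set `V_G` of `G(x,y,z) = (xy, z²)`: `{x = z = 0} ∪ {y = z = 0}`. -/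
def VG : Set (EuclideanSpace ℝ (Fin 3)) :=
  {p | (p 0 = 0 ∧ p 2 = 0) ∨ (p 1 = 0 ∧ p 2 = 0)}

/-- The Milnor set `M(G)` of `G(x,y,z) = (xy, z²)`: the points where `(x,y,z)`,
`∇G₁ = (y,x,0)` and `∇G₂ = (0,0,2z)` are linearly dependent; it equals
`{x = ±y} ∪ {z = 0}`. -/
def MG : Set (EuclideanSpace ℝ (Fin 3)) :=
  {p | p 0 = p 1 ∨ p 0 = -(p 1) ∨ p 2 = 0}

open Filter Topology

lemma eventually_add_ne_zero_nhdsGT (a : ℝ) : ∀ᶠ t in 𝓝[>] (0 : ℝ), a + t ≠ 0 := by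
  have hne : ∀ᶠ t in 𝓝[>] (0 : ℝ), t ≠ -a :=
    ((nhdsGT_le_nhdsNE 0).trans (nhdsNE_le_cofinite 0)) (eventually_cofinite_ne (-a))
  filter_upwards [hne] with t ht
  contrapose! ht
  linarith

/-- Every point of `V_G` is a limit of points `p + t • (1, 1, 0)`, `t → 0⁺`, of the plane
`{z = 0} ⊆ M(G)`, which leave both lines of `V_G`. -/
lemma VG_subset_closure_MG_diff_VG : VG ⊆ closure (MG \ VG) := by
  intro p hp
  have hp2 : p 2 = 0 := hp.elim And.right And.right
  let γ : ℝ → EuclideanSpace ℝ (Fin 3) := fun t ↦ p + t • !₂[1, 1, 0]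
  have hγ : Tendsto γ (𝓝[>] 0) (𝓝 p) := by
    refine tendsto_nhdsWithin_of_tendsto_nhds ?_
    have hcont : Continuous γ := by fun_prop
    simpa [γ] using hcont.tendsto 0
  refine mem_closure_of_tendsto hγ ?_
  filter_upwards [eventually_add_ne_zero_nhdsGT (p 0), eventually_add_ne_zero_nhdsGT (p 1)]
    with t hx hy
  simp [MG, VG, γ, hp2, hx, hy]

lemma not_VG_subset_zero : ¬ VG ⊆ {0} := by
  intro h
  have hmem : !₂[(0 : ℝ), 1, 0] ∈ VG := by simp [VG]
  simpa using congrArg (· 1) (h hmem)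

/-- `G(x,y,z) = (xy, z²)` fails the Milnor condition (b) at the origin; in fact
`closure (M(G) ∖ V_G) ∩ V_G = V_G`. -/
theorem milnor_condition_b_fails_xy_z2 :
    closure (MG \ VG) ∩ VG = VG ∧
    ¬ (closure (MG \ VG) ∩ VG ⊆ {(0 : EuclideanSpace ℝ (Fin 3))}) := by
  have hcl : closure (MG \ VG) ∩ VG = VG :=
    Set.inter_eq_right.mpr VG_subset_closure_MG_diff_VG
  exact ⟨hcl, by rw [hcl]; exact not_VG_subset_zero⟩
end
end
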